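/- A permutation σ of length n belongs to the juxtaposition class Av(312|21) if and only if σ avoids all four of the patterns 4132, 4231, 31254, and 41253. -/
import Mathlib

/-- `σ` contains an occurrence of the pattern `π` using only positions in `S`. -/
def ContainsIn {n m : ℕ} (σ : Equiv.Perm (Fin n)) (π : Equiv.Perm (Fin m))
    (S : Set (Fin n)) : Prop :=
  ∃ f : Fin m → Fin n, StrictMono f ∧ (∀ s, f s ∈ S) ∧
    ∀ s t : Fin m, σ (f s) < σ (f t) ↔ π s < π t

/-- `σ` contains an occurrence of the pattern `π`. -/
def Contains {n m : ℕ} (σ : Equiv.Perm (Fin n)) (π : Equiv.Perm (Fin m)) : Prop :=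
  ContainsIn σ π Set.univ

/-- `σ` avoids the pattern `π`. -/
def Avoids {n m : ℕ} (σ : Equiv.Perm (Fin n)) (π : Equiv.Perm (Fin m)) : Prop :=
  ¬ Contains σ π

/-- `σ` lies in the juxtaposition class `Av(P|Q)`: positions split at some cut `k`
(`0 ≤ k ≤ n`), no occurrence of `P` within the first `k` positions and no occurrence
of `Q` within the remaining positions. -/
def JuxtAv {n p q : ℕ} (P : Equiv.Perm (Fin p)) (Q : Equiv.Perm (Fin q))
    (σ : Equiv.Perm (Fin n)) : Prop :=
  ∃ k ≤ n, ¬ ContainsIn σ P {i : Fin n | (i : ℕ) < k} ∧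
    ¬ ContainsIn σ Q {i : Fin n | k ≤ (i : ℕ)}

noncomputable def p312 : Equiv.Perm (Fin 3) :=
  Equiv.ofBijective (![2,0,1] : Fin 3 → Fin 3) (by decide)

noncomputable def p21 : Equiv.Perm (Fin 2) :=
  Equiv.ofBijective (![1,0] : Fin 2 → Fin 2) (by decide)

noncomputable def p4132 : Equiv.Perm (Fin 4) :=
  Equiv.ofBijective (![3,0,2,1] : Fin 4 → Fin 4) (by decide)

noncomputable def p4231 : Equiv.Perm (Fin 4) :=
  Equiv.ofBijective (![3,1,2,0] : Fin 4 → Fin 4) (by decide)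

noncomputable def p31254 : Equiv.Perm (Fin 5) :=
  Equiv.ofBijective (![2,0,1,4,3] : Fin 5 → Fin 5) (by decide)

noncomputable def p41253 : Equiv.Perm (Fin 5) :=
  Equiv.ofBijective (![3,0,1,4,2] : Fin 5 → Fin 5) (by decide)

section Helpers

variable {n : ℕ} (σ : Equiv.Perm (Fin n)) (S : Set (Fin n))

lemma mk21 (a b : Fin n) (hab : a < b) (ha : a ∈ S) (hb : b ∈ S)
    (v1 : σ b < σ a) : ContainsIn σ p21 S := by
  refine ⟨![a,b], ?_, ?_, ?_⟩
  · intro s t h; fin_cases s <;> fin_cases t <;> simp_all <;> omega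
  · intro s; fin_cases s <;> simpa
  · intro s t; fin_cases s <;> fin_cases t <;>
      simp [p21, Equiv.ofBijective,
        show Function.Bijective (![1,0] : Fin 2 → Fin 2) from by decide] <;> omega

lemma mk312 (a b c : Fin n) (hab : a < b) (hbc : b < c)
    (ha : a ∈ S) (hb : b ∈ S) (hc : c ∈ S)
    (v1 : σ b < σ c) (v2 : σ c < σ a) : ContainsIn σ p312 S := by
  refine ⟨![a,b,c], ?_, ?_, ?_⟩
  · intro s t h; fin_cases s <;> fin_cases t <;> simp_all <;> omega
  · intro s; fin_cases s <;> simpa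
  · intro s t; fin_cases s <;> fin_cases t <;>
      simp [p312, Equiv.ofBijective,
        show Function.Bijective (![2,0,1] : Fin 3 → Fin 3) from by decide] <;> omega

lemma mk4132 (a b c d : Fin n)
    (hab : a < b) (hbc : b < c) (hcd : c < d)
    (ha : a ∈ S) (hb : b ∈ S) (hc : c ∈ S) (hd : d ∈ S)
    (v1 : σ b < σ d) (v2 : σ d < σ c) (v3 : σ c < σ a) : ContainsIn σ p4132 S := by
  refine ⟨![a,b,c,d], ?_, ?_, ?_⟩
  · intro s t h; fin_cases s <;> fin_cases t <;> simp_all <;> omega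
  · intro s; fin_cases s <;> simpa
  · intro s t; fin_cases s <;> fin_cases t <;>
      simp [p4132, Equiv.ofBijective,
        show Function.Bijective (![3,0,2,1] : Fin 4 → Fin 4) from by decide] <;> omega

lemma mk4231 (a b c d : Fin n)
    (hab : a < b) (hbc : b < c) (hcd : c < d)
    (ha : a ∈ S) (hb : b ∈ S) (hc : c ∈ S) (hd : d ∈ S)
    (v1 : σ d < σ b) (v2 : σ b < σ c) (v3 : σ c < σ a) : ContainsIn σ p4231 S := by
  refine ⟨![a,b,c,d], ?_, ?_, ?_⟩
  · intro s t h; fin_cases s <;> fin_cases t <;> simp_all <;> omega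
  · intro s; fin_cases s <;> simpa
  · intro s t; fin_cases s <;> fin_cases t <;>
      simp [p4231, Equiv.ofBijective,
        show Function.Bijective (![3,1,2,0] : Fin 4 → Fin 4) from by decide] <;> omega

lemma mk31254 (a b c d e : Fin n)
    (hab : a < b) (hbc : b < c) (hcd : c < d) (hde : d < e)
    (ha : a ∈ S) (hb : b ∈ S) (hc : c ∈ S) (hd : d ∈ S) (he : e ∈ S)
    (v1 : σ b < σ c) (v2 : σ c < σ a) (v3 : σ a < σ e) (v4 : σ e < σ d) :
    ContainsIn σ p31254 S := by
  refine ⟨![a,b,c,d,e], ?_, ?_, ?_⟩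
  · intro s t h; fin_cases s <;> fin_cases t <;> simp_all <;> omega
  · intro s; fin_cases s <;> simpa
  · intro s t; fin_cases s <;> fin_cases t <;>
      simp [p31254, Equiv.ofBijective,
        show Function.Bijective (![2,0,1,4,3] : Fin 5 → Fin 5) from by decide] <;> omega

lemma mk41253 (a b c d e : Fin n)
    (hab : a < b) (hbc : b < c) (hcd : c < d) (hde : d < e)
    (ha : a ∈ S) (hb : b ∈ S) (hc : c ∈ S) (hd : d ∈ S) (he : e ∈ S)
    (v1 : σ b < σ c) (v2 : σ c < σ e) (v3 : σ e < σ a) (v4 : σ a < σ d) :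
    ContainsIn σ p41253 S := by
  refine ⟨![a,b,c,d,e], ?_, ?_, ?_⟩
  · intro s t h; fin_cases s <;> fin_cases t <;> simp_all <;> omega
  · intro s; fin_cases s <;> simpa
  · intro s t; fin_cases s <;> fin_cases t <;>
      simp [p41253, Equiv.ofBijective,
        show Function.Bijective (![3,0,1,4,2] : Fin 5 → Fin 5) from by decide] <;> omega

variable {σ S}

lemma of21 (h : ContainsIn σ p21 S) :
    ∃ a b, a < b ∧ a ∈ S ∧ b ∈ S ∧ σ b < σ a := by
  obtain ⟨f, hm, hS, hi⟩ := h
  exact ⟨f 0, f 1, hm (by decide), hS 0, hS 1, (hi 1 0).mpr (by decide)⟩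

lemma of312 (h : ContainsIn σ p312 S) :
    ∃ a b c, a < b ∧ b < c ∧ a ∈ S ∧ b ∈ S ∧ c ∈ S ∧ σ b < σ c ∧ σ c < σ a := by
  obtain ⟨f, hm, hS, hi⟩ := h
  exact ⟨f 0, f 1, f 2, hm (by decide), hm (by decide), hS 0, hS 1, hS 2,
    (hi 1 2).mpr (by decide), (hi 2 0).mpr (by decide)⟩

lemma of4132 (h : ContainsIn σ p4132 S) :
    ∃ a b c d, a < b ∧ b < c ∧ c < d ∧ a ∈ S ∧ b ∈ S ∧ c ∈ S ∧ d ∈ S ∧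
      σ b < σ d ∧ σ d < σ c ∧ σ c < σ a := by
  obtain ⟨f, hm, hS, hi⟩ := h
  exact ⟨f 0, f 1, f 2, f 3, hm (by decide), hm (by decide), hm (by decide),
    hS 0, hS 1, hS 2, hS 3,
    (hi 1 3).mpr (by decide), (hi 3 2).mpr (by decide), (hi 2 0).mpr (by decide)⟩

lemma of4231 (h : ContainsIn σ p4231 S) :
    ∃ a b c d, a < b ∧ b < c ∧ c < d ∧ a ∈ S ∧ b ∈ S ∧ c ∈ S ∧ d ∈ S ∧
      σ d < σ b ∧ σ b < σ c ∧ σ c < σ a := by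
  obtain ⟨f, hm, hS, hi⟩ := h
  exact ⟨f 0, f 1, f 2, f 3, hm (by decide), hm (by decide), hm (by decide),
    hS 0, hS 1, hS 2, hS 3,
    (hi 3 1).mpr (by decide), (hi 1 2).mpr (by decide), (hi 2 0).mpr (by decide)⟩

lemma of31254 (h : ContainsIn σ p31254 S) :
    ∃ a b c d e, a < b ∧ b < c ∧ c < d ∧ d < e ∧
      a ∈ S ∧ b ∈ S ∧ c ∈ S ∧ d ∈ S ∧ e ∈ S ∧
      σ b < σ c ∧ σ c < σ a ∧ σ a < σ e ∧ σ e < σ d := by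
  obtain ⟨f, hm, hS, hi⟩ := h
  exact ⟨f 0, f 1, f 2, f 3, f 4, hm (by decide), hm (by decide), hm (by decide),
    hm (by decide), hS 0, hS 1, hS 2, hS 3, hS 4,
    (hi 1 2).mpr (by decide), (hi 2 0).mpr (by decide),
    (hi 0 4).mpr (by decide), (hi 4 3).mpr (by decide)⟩

lemma of41253 (h : ContainsIn σ p41253 S) :
    ∃ a b c d e, a < b ∧ b < c ∧ c < d ∧ d < e ∧
      a ∈ S ∧ b ∈ S ∧ c ∈ S ∧ d ∈ S ∧ e ∈ S ∧
      σ b < σ c ∧ σ c < σ e ∧ σ e < σ a ∧ σ a < σ d := by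
  obtain ⟨f, hm, hS, hi⟩ := h
  exact ⟨f 0, f 1, f 2, f 3, f 4, hm (by decide), hm (by decide), hm (by decide),
    hm (by decide), hS 0, hS 1, hS 2, hS 3, hS 4,
    (hi 1 2).mpr (by decide), (hi 2 4).mpr (by decide),
    (hi 4 0).mpr (by decide), (hi 0 3).mpr (by decide)⟩

end Helpers

theorem stmt {n : ℕ} (σ : Equiv.Perm (Fin n)) :
    JuxtAv p312 p21 σ ↔ Avoids σ p4132 ∧ Avoids σ p4231 ∧ Avoids σ p31254 ∧ Avoids σ p41253 := by
  constructor
  · rintro ⟨k, hk, h312, h21⟩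
    refine ⟨?_, ?_, ?_, ?_⟩
    · intro h
      obtain ⟨a, b, c, d, hab, hbc, hcd, -, -, -, -, v1, v2, v3⟩ := of4132 h
      by_cases hck : (c : ℕ) < k
      · exact h312 (mk312 σ _ a b c hab hbc
          (by simp only [Set.mem_setOf_eq]; omega) (by simp only [Set.mem_setOf_eq]; omega)
          hck (v1.trans v2) v3)
      · exact h21 (mk21 σ _ c d hcd (by simp only [Set.mem_setOf_eq]; omega)
          (by simp only [Set.mem_setOf_eq]; omega) v2)
    · intro h
      obtain ⟨a, b, c, d, hab, hbc, hcd, -, -, -, -, v1, v2, v3⟩ := of4231 h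
      by_cases hck : (c : ℕ) < k
      · exact h312 (mk312 σ _ a b c hab hbc
          (by simp only [Set.mem_setOf_eq]; omega) (by simp only [Set.mem_setOf_eq]; omega)
          hck v2 v3)
      · exact h21 (mk21 σ _ c d hcd (by simp only [Set.mem_setOf_eq]; omega)
          (by simp only [Set.mem_setOf_eq]; omega) (v1.trans v2))
    · intro h
      obtain ⟨a, b, c, d, e, hab, hbc, hcd, hde, -, -, -, -, -, v1, v2, v3, v4⟩ := of31254 h
      by_cases hck : (c : ℕ) < k
      · exact h312 (mk312 σ _ a b c hab hbc
          (by simp only [Set.mem_setOf_eq]; omega) (by simp only [Set.mem_setOf_eq]; omega)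
          hck v1 v2)
      · exact h21 (mk21 σ _ d e hde (by simp only [Set.mem_setOf_eq]; omega)
          (by simp only [Set.mem_setOf_eq]; omega) v4)
    · intro h
      obtain ⟨a, b, c, d, e, hab, hbc, hcd, hde, -, -, -, -, -, v1, v2, v3, v4⟩ := of41253 h
      by_cases hck : (c : ℕ) < k
      · exact h312 (mk312 σ _ a b c hab hbc
          (by simp only [Set.mem_setOf_eq]; omega) (by simp only [Set.mem_setOf_eq]; omega)
          hck v1 (v2.trans v3))
      · exact h21 (mk21 σ _ d e hde (by simp only [Set.mem_setOf_eq]; omega)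
          (by simp only [Set.mem_setOf_eq]; omega) (v3.trans v4))
  · rintro ⟨H1, H2, H3, H4⟩
    have htri : ∀ x y : Fin n, x ≠ y → σ x < σ y ∨ σ y < σ x :=
      fun x y hxy => (σ.injective.ne hxy).lt_or_gt
    set T : Set ℕ := {k | ∀ i j : Fin n, k ≤ (i : ℕ) → i < j → σ i < σ j} with hT
    have hnT : n ∈ T := by
      intro i j hi _; exact absurd i.isLt (by omega)
    set k := sInf T with hkdef
    have hkT : k ∈ T := Nat.sInf_mem ⟨n, hnT⟩
    have hkn : k ≤ n := Nat.sInf_le hnT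
    refine ⟨k, hkn, ?_, ?_⟩
    · intro h
      obtain ⟨a, b, c, hab, hbc, ha, hb, hc, v1, v2⟩ := of312 h
      simp only [Set.mem_setOf_eq] at ha hb hc
      -- k > 0, so k - 1 ∉ T
      have hk0 : 0 < k := by omega
      have hkm : k - 1 ∉ T := Nat.notMem_of_lt_sInf (by omega)
      simp only [hT, Set.mem_setOf_eq, not_forall] at hkm
      obtain ⟨d, j, hd1, hdj, hv⟩ := hkm
      have hjd : σ j < σ d := by
        rcases htri d j (ne_of_lt hdj) with h' | h'
        · exact absurd h' hv
        · exact h'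
      have hdk : (d : ℕ) = k - 1 := by
        by_contra hne
        exact hv (hkT d j (by omega) hdj)
      have hcd : c ≤ d := by
        rw [Fin.le_def]; omega
      rcases eq_or_lt_of_le hcd with rfl | hcd'
      · -- c = d : positions a < b < c < j, σ j < σ c
        rcases htri b j (ne_of_lt (hbc.trans hdj)) with hbj | hjb
        · exact H1 (mk4132 σ Set.univ a b c j hab hbc hdj trivial trivial trivial trivial
            hbj hjd v2)
        · exact H2 (mk4231 σ Set.univ a b c j hab hbc hdj trivial trivial trivial trivial
            hjb v1 v2)
      · -- c < d < j
        rcases htri a d (ne_of_lt (hab.trans (hbc.trans hcd'))) with hAd | hAd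
        · -- σ a < σ d
          rcases htri a j (ne_of_lt (hab.trans (hbc.trans (hcd'.trans hdj)))) with haj | hja
          · exact H3 (mk31254 σ Set.univ a b c d j hab hbc hcd' hdj
              trivial trivial trivial trivial trivial v1 v2 haj hjd)
          · rcases htri c j (ne_of_lt (hcd'.trans hdj)) with hcj | hjc
            · exact H4 (mk41253 σ Set.univ a b c d j hab hbc hcd' hdj
                trivial trivial trivial trivial trivial v1 hcj hja hAd)
            · rcases htri b j (ne_of_lt (hbc.trans (hcd'.trans hdj))) with hbj | hjb
              · exact H1 (mk4132 σ Set.univ a b c j hab hbc (hcd'.trans hdj)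
                  trivial trivial trivial trivial hbj hjc v2)
              · exact H2 (mk4231 σ Set.univ a b c j hab hbc (hcd'.trans hdj)
                  trivial trivial trivial trivial hjb v1 v2)
        · -- σ d < σ a
          rcases htri b j (ne_of_lt (hbc.trans (hcd'.trans hdj))) with hbj | hjb
          · exact H1 (mk4132 σ Set.univ a b d j hab (hbc.trans hcd') hdj
              trivial trivial trivial trivial hbj hjd hAd)
          · rcases htri b d (ne_of_lt (hbc.trans hcd')) with hbd | hdb
            · exact H2 (mk4231 σ Set.univ a b d j hab (hbc.trans hcd') hdj
                trivial trivial trivial trivial hjb hbd hAd)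
            · exact H2 (mk4231 σ Set.univ a b c d hab hbc hcd'
                trivial trivial trivial trivial hdb v1 v2)
    · intro h
      obtain ⟨a, b, hab, ha, hb, v⟩ := of21 h
      simp only [Set.mem_setOf_eq] at ha hb
      exact absurd (hkT a b ha hab) (not_lt.mpr v.le)
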